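/- Let G be a finite group, P a projective resolution of the trivial Z[G]-module Z with differentials d_n, and n ≥ 1. Define Φ from the group of Z[G]-homomorphisms f : Z → ker(d_n : P_n → P_{n-1}) ∩ (G-invariants regarded inside P_n) to the homology H_n(G,Z) of P ⊗_{Z[G]} Z, by sending f to the class of y ⊗ 1 where f(1) = N·y. Then Φ is a well-defined surjective group homomorphism whose kernel consists exactly of those f that factor through a projective Z[G]-module; hence Φ induces an isomorphism Hom-bar_{Z[G]}(Z, Ω^{n+1}Z) ≅ H_n(G,Z). -/

import Mathlib

variable (G : Type) [Group G]

/-- The augmentation ring homomorphism `ℤ[G] → ℤ`. -/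
noncomputable def augmentation : MonoidAlgebra ℤ G →+* ℤ :=
  ((MonoidAlgebra.lift ℤ ℤ G) 1).toRingHom

/-- `ℤ` as the trivial `ℤ[G]`-module. -/
noncomputable instance trivialZModule : Module (MonoidAlgebra ℤ G) ℤ :=
  Module.compHom ℤ (augmentation G)

/-- A `ℤ[G]`-linear map factors through a projective `ℤ[G]`-module. -/
def FactorsThroughProjective {M N : Type}
    [AddCommGroup M] [Module (MonoidAlgebra ℤ G) M]
    [AddCommGroup N] [Module (MonoidAlgebra ℤ G) N]
    (f : M →ₗ[MonoidAlgebra ℤ G] N) : Prop :=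
  ∃ (P : Type) (_ : AddCommGroup P) (_ : Module (MonoidAlgebra ℤ G) P),
    Module.Projective (MonoidAlgebra ℤ G) P ∧
    ∃ (f₁ : M →ₗ[MonoidAlgebra ℤ G] P) (f₂ : P →ₗ[MonoidAlgebra ℤ G] N), f = f₂.comp f₁

/-- The augmentation subgroup of a `ℤ[G]`-module; the quotient by it is the group of
coinvariants `M ⊗_{ℤ[G]} ℤ`. -/
def augSubgroup (M : Type) [AddCommGroup M] [Module (MonoidAlgebra ℤ G) M] :
    AddSubgroup M :=
  AddSubgroup.closure {z | ∃ (g : G) (x : M), z = (MonoidAlgebra.of ℤ G g) • x - x}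

/-- The subgroup of `G`-invariant elements. -/
def invSubgroup (M : Type) [AddCommGroup M] [Module (MonoidAlgebra ℤ G) M] :
    AddSubgroup M where
  carrier := {x | ∀ g : G, (MonoidAlgebra.of ℤ G g) • x = x}
  zero_mem' := fun g => smul_zero _
  add_mem' := fun {a b} ha hb g => by rw [smul_add, ha g, hb g]
  neg_mem' := fun {a} ha g => by rw [smul_neg, ha g]

/-! For a projective `ℤ[G]`-module `M`, multiplication by the norm element `N` maps `M` onto the
invariants `M^G`, with kernel the augmentation subgroup `I_G M`: via a splitting `M → ℤ[G]^(M)`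
this reduces to `ℤ[G]` itself, whose invariants are `ℤ • N` and where `aug (N * r) = |G| * aug r`.
Hence `y ↦ N • y` maps the cycles of `P ⊗_{ℤ[G]} ℤ` in degree `n` onto the invariant cycles of
`P_n`, with kernel inside `I_G P_n`, hence inside the boundaries; `Φ` is the induced inverse.
A map `f : ℤ → Ω` factoring through a projective `Q` has `f 1 = N • ω` with `ω ∈ Ω = im d_{n+1}`,
since the image of `1` in `Q` is invariant; conversely, if `y = d w + a` with `a ∈ I_G P_n`, then
`N • y = d (N • w)` and `f` factors through `P_{n+1}`. -/

section

-- Through the trivial module `ℤ`, this instance would make `ℤ[G]` a second `ℤ[G]`-module (acting on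
-- coefficients via the augmentation), a diamond with the regular module.
attribute [-instance] MonoidAlgebra.instModule

variable {G}

lemma augmentation_of (g : G) : augmentation G (MonoidAlgebra.of ℤ G g) = 1 := by
  simp [augmentation]

section Module

variable {M : Type} [AddCommGroup M] [Module (MonoidAlgebra ℤ G) M]

lemma smul_sub_augmentation_smul_mem_augSubgroup (r : MonoidAlgebra ℤ G) (x : M) :
    r • x - augmentation G r • x ∈ augSubgroup G M := by
  induction r using MonoidAlgebra.induction_on with
  | of g =>
    rw [augmentation_of, one_smul]
    exact AddSubgroup.subset_closure ⟨g, x, rfl⟩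
  | add r s hr hs =>
    rw [add_smul, map_add, add_smul, add_sub_add_comm]
    exact add_mem hr hs
  | smul c r hr =>
    rw [map_zsmul, smul_assoc, smul_assoc, ← smul_sub]
    exact AddSubgroup.zsmul_mem _ hr c

lemma smul_mem_augSubgroup_of_augmentation_eq_zero {r : MonoidAlgebra ℤ G}
    (hr : augmentation G r = 0) (x : M) : r • x ∈ augSubgroup G M := by
  simpa [hr] using smul_sub_augmentation_smul_mem_augSubgroup r x

lemma smul_eq_augmentation_smul_of_mem_invSubgroup (r : MonoidAlgebra ℤ G) {v : M}
    (hv : v ∈ invSubgroup G M) : r • v = augmentation G r • v := by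
  induction r using MonoidAlgebra.induction_on with
  | of g => rw [augmentation_of, one_smul]; exact hv g
  | add r s hr hs => rw [add_smul, hr, hs, map_add, add_smul]
  | smul c r hr => rw [smul_assoc, hr, map_zsmul, smul_assoc]

def homOfMemInvSubgroup (v : M) (hv : v ∈ invSubgroup G M) :
    ℤ →ₗ[MonoidAlgebra ℤ G] M where
  toFun k := k • v
  map_add' k l := add_smul k l v
  map_smul' r k := by
    change (augmentation G r * k) • v = r • k • v
    rw [smul_comm, smul_eq_augmentation_smul_of_mem_invSubgroup r hv, mul_smul, smul_comm]

lemma apply_one_mem_invSubgroup (f : ℤ →ₗ[MonoidAlgebra ℤ G] M) : f 1 ∈ invSubgroup G M := by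
  intro g
  rw [← f.map_smul]
  congr 1
  change augmentation G _ * 1 = 1
  rw [augmentation_of, mul_one]

end Module

section Norm

variable (G) [Fintype G]

noncomputable def normElement : MonoidAlgebra ℤ G := ∑ g : G, MonoidAlgebra.of ℤ G g

variable {G}

lemma augmentation_normElement : augmentation G (normElement G) = Fintype.card G := by
  simp only [normElement, map_sum, augmentation_of, Finset.sum_const, Finset.card_univ,
    nsmul_eq_mul, mul_one]

lemma coeff_normElement (a : G) : (normElement G).coeff a = 1 := by
  classical
  simp only [normElement, MonoidAlgebra.of_apply]
  rw [MonoidAlgebra.coeff_sum, Finset.sum_apply']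
  simp [MonoidAlgebra.coeff_single, Finsupp.single_apply]

lemma of_mul_normElement (g : G) :
    MonoidAlgebra.of ℤ G g * normElement G = normElement G := by
  simp only [normElement, Finset.mul_sum, ← map_mul]
  exact Equiv.sum_comp (Equiv.mulLeft g) (MonoidAlgebra.of ℤ G)

lemma normElement_mul_of (g : G) :
    normElement G * MonoidAlgebra.of ℤ G g = normElement G := by
  simp only [normElement, Finset.sum_mul, ← map_mul]
  exact Equiv.sum_comp (Equiv.mulRight g) (MonoidAlgebra.of ℤ G)

lemma eq_coeff_one_smul_normElement_of_mem_invSubgroup {r : MonoidAlgebra ℤ G}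
    (hr : r ∈ invSubgroup G (MonoidAlgebra ℤ G)) : r = r.coeff 1 • normElement G := by
  ext a
  have hra := congr(($(hr a)).coeff a)
  rw [smul_eq_mul, MonoidAlgebra.of_apply, MonoidAlgebra.coeff_single_mul_apply, inv_mul_cancel,
    one_mul] at hra
  rw [MonoidAlgebra.coeff_smul, Finsupp.smul_apply, coeff_normElement, smul_eq_mul, mul_one, ← hra]

variable {M : Type} [AddCommGroup M] [Module (MonoidAlgebra ℤ G) M]

lemma normElement_smul_mem_invSubgroup (x : M) : normElement G • x ∈ invSubgroup G M :=
  fun g => by rw [← mul_smul, of_mul_normElement]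

lemma normElement_smul_eq_zero_of_mem_augSubgroup {x : M} (hx : x ∈ augSubgroup G M) :
    normElement G • x = 0 := by
  induction hx using AddSubgroup.closure_induction with
  | mem z hz =>
    obtain ⟨g, y, rfl⟩ := hz
    rw [smul_sub, ← mul_smul, normElement_mul_of, sub_self]
  | zero => exact smul_zero _
  | add a b _ _ ha hb => rw [smul_add, ha, hb, add_zero]
  | neg a _ ha => rw [smul_neg, ha, neg_zero]

variable [Module.Projective (MonoidAlgebra ℤ G) M]

lemma exists_normElement_smul_eq_of_mem_invSubgroup {x : M} (hx : x ∈ invSubgroup G M) :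
    ∃ y : M, normElement G • y = x := by
  obtain ⟨s, hs⟩ := Module.projective_def.mp ‹Module.Projective (MonoidAlgebra ℤ G) M›
  have hcoeff (i : M) : s x i = (s x i).coeff 1 • normElement G :=
    eq_coeff_one_smul_normElement_of_mem_invSubgroup fun g =>
      (congr($(s.map_smul (MonoidAlgebra.of ℤ G g) x) i)).symm.trans (by rw [hx g])
  refine ⟨(s x).sum fun i r => r.coeff 1 • i, ?_⟩
  conv_rhs => rw [← hs x, Finsupp.linearCombination_apply]
  rw [Finsupp.smul_sum]
  refine Finsupp.sum_congr fun i _ => ?_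
  rw [smul_comm, ← smul_assoc, ← hcoeff, id]

lemma mem_augSubgroup_of_normElement_smul_eq_zero {x : M} (hx : normElement G • x = 0) :
    x ∈ augSubgroup G M := by
  obtain ⟨s, hs⟩ := Module.projective_def.mp ‹Module.Projective (MonoidAlgebra ℤ G) M›
  have haug (i : M) : augmentation G (s x i) = 0 := by
    have hi : normElement G * s x i = 0 := by
      have hi := congr($(s.map_smul (normElement G) x) i)
      rw [hx, map_zero, Finsupp.zero_apply] at hi
      exact hi.symm
    have := congr(augmentation G $hi)
    rwa [map_mul, augmentation_normElement, map_zero, mul_eq_zero,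
      or_iff_right (Nat.cast_ne_zero.mpr Fintype.card_ne_zero)] at this
  rw [← hs x, Finsupp.linearCombination_apply]
  exact AddSubgroup.sum_mem _ fun i _ => smul_mem_augSubgroup_of_augmentation_eq_zero (haug i) _

lemma FactorsThroughProjective.exists_normElement_smul_eq {N : Type} [AddCommGroup N]
    [Module (MonoidAlgebra ℤ G) N] {f : ℤ →ₗ[MonoidAlgebra ℤ G] N}
    (hf : FactorsThroughProjective G f) : ∃ n : N, f 1 = normElement G • n := by
  obtain ⟨Q, _, _, _, f₁, f₂, rfl⟩ := hf
  obtain ⟨q, hq⟩ := exists_normElement_smul_eq_of_mem_invSubgroup (apply_one_mem_invSubgroup f₁)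
  exact ⟨f₂ q, by rw [LinearMap.comp_apply, ← hq, map_smul]⟩

end Norm

section Homology

variable {A M L : Type} [AddCommGroup A] [Module (MonoidAlgebra ℤ G) A]
  [AddCommGroup M] [Module (MonoidAlgebra ℤ G) M] [AddCommGroup L] [Module (MonoidAlgebra ℤ G) L]
  (d₂ : A →ₗ[MonoidAlgebra ℤ G] M) (d₁ : M →ₗ[MonoidAlgebra ℤ G] L)

noncomputable def invariantCycles : AddSubgroup M :=
  invSubgroup G M ⊓ (LinearMap.ker d₁).toAddSubgroup

noncomputable def coinvariantCycles : AddSubgroup M :=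
  AddSubgroup.comap d₁.toAddMonoidHom (augSubgroup G L)

noncomputable def coinvariantBoundaries : AddSubgroup M :=
  AddSubgroup.map d₂.toAddMonoidHom ⊤ ⊔ augSubgroup G M

noncomputable abbrev coinvariantHomology : Type :=
  coinvariantCycles d₁ ⧸ (coinvariantBoundaries d₂).addSubgroupOf (coinvariantCycles d₁)

variable [Fintype G]

lemma normElement_smul_mem_invariantCycles {y : M} (hy : y ∈ coinvariantCycles d₁) :
    normElement G • y ∈ invariantCycles d₁ :=
  ⟨normElement_smul_mem_invSubgroup y, LinearMap.mem_ker.mpr <| by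
    rw [map_smul]
    exact normElement_smul_eq_zero_of_mem_augSubgroup hy⟩

lemma exists_factorsThroughProjective_of_mem_coinvariantBoundaries
    [Module.Projective (MonoidAlgebra ℤ G) A] (hd : ∀ a, d₁ (d₂ a) = 0) {y : M}
    (hy : y ∈ coinvariantBoundaries d₂) :
    ∃ f : ℤ →ₗ[MonoidAlgebra ℤ G] LinearMap.ker d₁,
      (f 1 : M) = normElement G • y ∧ FactorsThroughProjective G f := by
  obtain ⟨_, ⟨w, -, rfl⟩, a, ha, rfl⟩ := AddSubgroup.mem_sup.mp hy
  let f₂ := d₂.codRestrict (LinearMap.ker d₁) hd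
  refine ⟨f₂ ∘ₗ homOfMemInvSubgroup _ (normElement_smul_mem_invSubgroup w), ?_,
    A, _, _, inferInstance, _, f₂, rfl⟩
  change d₂ ((1 : ℤ) • normElement G • w) = normElement G • (d₂ w + a)
  rw [one_smul, map_smul, smul_add, normElement_smul_eq_zero_of_mem_augSubgroup ha, add_zero]

noncomputable def normMap : coinvariantCycles d₁ →+ invariantCycles d₁ :=
  AddMonoidHom.mk' (fun y => ⟨normElement G • y, normElement_smul_mem_invariantCycles d₁ y.2⟩)
    fun _ _ => Subtype.ext (smul_add _ _ _)

lemma normMap_surjective [Module.Projective (MonoidAlgebra ℤ G) M]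
    [Module.Projective (MonoidAlgebra ℤ G) L] : Function.Surjective (normMap d₁) := by
  rintro ⟨x, hx_inv, -⟩
  obtain ⟨y, rfl⟩ := exists_normElement_smul_eq_of_mem_invSubgroup hx_inv
  have hy : d₁ y ∈ augSubgroup G L := by
    refine mem_augSubgroup_of_normElement_smul_eq_zero ?_
    rwa [← map_smul]
  exact ⟨⟨y, hy⟩, rfl⟩

lemma ker_normMap_le [Module.Projective (MonoidAlgebra ℤ G) M] :
    (normMap d₁).ker ≤ (coinvariantBoundaries d₂).addSubgroupOf (coinvariantCycles d₁) :=
  fun _ hy => AddSubgroup.mem_sup_right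
    (mem_augSubgroup_of_normElement_smul_eq_zero (congrArg Subtype.val hy))

/-- The map `Φ : N • y ↦ [y]`, as the inverse of the isomorphism induced by `normMap`. -/
noncomputable def invariantCyclesToHomology [Module.Projective (MonoidAlgebra ℤ G) M]
    [Module.Projective (MonoidAlgebra ℤ G) L] :
    invariantCycles d₁ →+ coinvariantHomology d₂ d₁ :=
  (QuotientAddGroup.lift _ (QuotientAddGroup.mk' _)
      (by rw [QuotientAddGroup.ker_mk']; exact ker_normMap_le d₂ d₁)).comp
    (QuotientAddGroup.quotientKerEquivOfSurjective _ (normMap_surjective d₁)).symm.toAddMonoidHom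

variable [Module.Projective (MonoidAlgebra ℤ G) M] [Module.Projective (MonoidAlgebra ℤ G) L]

lemma invariantCyclesToHomology_normMap (y : coinvariantCycles d₁) :
    invariantCyclesToHomology d₂ d₁ (normMap d₁ y) = QuotientAddGroup.mk y := by
  have h : (QuotientAddGroup.quotientKerEquivOfSurjective _ (normMap_surjective d₁)).symm
      (normMap d₁ y) = QuotientAddGroup.mk y := (AddEquiv.symm_apply_eq _).mpr rfl
  simp only [invariantCyclesToHomology, AddMonoidHom.comp_apply, AddEquiv.toAddMonoidHom_eq_coe,
    AddMonoidHom.coe_coe, h]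
  rfl

lemma invariantCyclesToHomology_surjective :
    Function.Surjective (invariantCyclesToHomology d₂ d₁) := by
  intro q
  induction q using QuotientAddGroup.induction_on with
  | H y => exact ⟨normMap d₁ y, invariantCyclesToHomology_normMap d₂ d₁ y⟩

lemma invariantCyclesToHomology_normMap_eq_zero_iff (y : coinvariantCycles d₁) :
    invariantCyclesToHomology d₂ d₁ (normMap d₁ y) = 0 ↔ (y : M) ∈ coinvariantBoundaries d₂ := by
  rw [invariantCyclesToHomology_normMap, QuotientAddGroup.eq_zero_iff,
    AddSubgroup.mem_addSubgroupOf]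

lemma invariantCyclesToHomology_eq_zero_iff [Module.Projective (MonoidAlgebra ℤ G) A]
    (hexact : LinearMap.ker d₁ = LinearMap.range d₂) (x : invariantCycles d₁) :
    invariantCyclesToHomology d₂ d₁ x = 0 ↔
      ∃ f : ℤ →ₗ[MonoidAlgebra ℤ G] LinearMap.ker d₁,
        (f 1 : M) = x ∧ FactorsThroughProjective G f := by
  obtain ⟨y, rfl⟩ := normMap_surjective d₁ x
  rw [invariantCyclesToHomology_normMap_eq_zero_iff]
  constructor
  · have hd (a : A) : d₁ (d₂ a) = 0 := by
      rw [← LinearMap.mem_ker, hexact]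
      exact LinearMap.mem_range_self d₂ a
    exact exists_factorsThroughProjective_of_mem_coinvariantBoundaries d₂ d₁ hd
  · rintro ⟨f, hf1, hf⟩
    obtain ⟨⟨n, hn⟩, hfn⟩ := hf.exists_normElement_smul_eq
    have hnZ : n ∈ coinvariantCycles d₁ := by
      change d₁ n ∈ augSubgroup G L
      rw [LinearMap.mem_ker.mp hn]
      exact zero_mem _
    have hy : normMap d₁ y = normMap d₁ ⟨n, hnZ⟩ :=
      Subtype.ext (hf1.symm.trans (congrArg Subtype.val hfn))
    rw [← invariantCyclesToHomology_normMap_eq_zero_iff d₂, hy,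
      invariantCyclesToHomology_normMap_eq_zero_iff]
    obtain ⟨w, rfl⟩ := hexact ▸ hn
    exact AddSubgroup.mem_sup_left ⟨w, trivial, rfl⟩

end Homology

end

theorem stmt9 [Fintype G]
    (P : ℕ → Type) [∀ k, AddCommGroup (P k)] [∀ k, Module (MonoidAlgebra ℤ G) (P k)]
    (d : ∀ k, P (k + 1) →ₗ[MonoidAlgebra ℤ G] P k)
    (hproj : ∀ k, Module.Projective (MonoidAlgebra ℤ G) (P k))
    (hexact : ∀ k, LinearMap.ker (d k) = LinearMap.range (d (k + 1)))
    (m : ℕ) :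
    -- the group of invariant cycles in `P (m+1)`, i.e. `Hom_{ℤ[G]}(ℤ, Ω^{m+2}ℤ)`
    let K : AddSubgroup (P (m + 1)) :=
      invSubgroup G (P (m + 1)) ⊓ (LinearMap.ker (d m)).toAddSubgroup
    -- cycles of `P ⊗_{ℤ[G]} ℤ` in degree `m+1`, presented inside `P (m+1)`
    let Z : AddSubgroup (P (m + 1)) :=
      AddSubgroup.comap (d m).toAddMonoidHom (augSubgroup G (P m))
    -- boundaries (together with the augmentation subgroup)
    let B : AddSubgroup (P (m + 1)) :=
      AddSubgroup.map (d (m + 1)).toAddMonoidHom ⊤ ⊔ augSubgroup G (P (m + 1))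
    -- `H_{m+1}(G,ℤ)` as the subquotient `Z / B`
    ∃ Φ : K →+ Z ⧸ B.addSubgroupOf Z,
      (∀ (y : P (m + 1)) (hy : y ∈ Z)
          (hN : (∑ g : G, MonoidAlgebra.of ℤ G g) • y ∈ K),
          Φ ⟨(∑ g : G, MonoidAlgebra.of ℤ G g) • y, hN⟩
            = QuotientAddGroup.mk (⟨y, hy⟩ : Z)) ∧
      Function.Surjective Φ ∧
      (∀ x : K, Φ x = 0 ↔
        ∃ f : ℤ →ₗ[MonoidAlgebra ℤ G] LinearMap.ker (d m),
          (f 1 : P (m + 1)) = (x : P (m + 1)) ∧ FactorsThroughProjective G f) := by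
  intro K Z B
  exact ⟨invariantCyclesToHomology (d (m + 1)) (d m),
    fun y hy _ => invariantCyclesToHomology_normMap (d (m + 1)) (d m) ⟨y, hy⟩,
    invariantCyclesToHomology_surjective (d (m + 1)) (d m),
    invariantCyclesToHomology_eq_zero_iff (d (m + 1)) (d m) (hexact m)⟩
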